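/- Let n ≥ 1 and let X = {0,1}^n be the set of binary words of length n with the ultrametric d(x,y) = 2^{-m} where m is the first coordinate at which x and y differ (and d(x,x) = 0). Then the center of distances of (X,d) equals {0} ∪ {2^{-1}, 2^{-2}, …, 2^{-n}}, and hence |C(X)| = 1 + n = 1 + log₂|X|. -/

import Mathlib

/-!
Every distance is `0` or `2^{-(i+1)}` for some `i < n`, and conversely each of these values is
realised from every word `p`: at `p` itself, and by flipping the `i`-th letter of `p`.
-/

/-- The ultrametric on binary words of length `n`: `d(x,y) = 2^{-m}` where `m` is the
first place (counting from `1`) at which `x` and `y` differ, and `d(x,x) = 0`. -/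
noncomputable def wordDist {n : ℕ} (x y : Fin n → Bool) : ℝ :=
  if h : x = y then 0
  else (2 : ℝ) ^ (-(((Finset.univ.filter fun i => x i ≠ y i).min'
    (by simpa [Finset.filter_nonempty_iff, funext_iff] using h) : Fin n) + 1 : ℤ))

open Set Function

def centerOfDistances {X : Type*} (d : X → X → ℝ) : Set ℝ :=
  {t | ∀ p, ∃ x, d p x = t}

lemma centerOfDistances_subset_range {X : Type*} (d : X → X → ℝ) (p : X) :
    centerOfDistances d ⊆ range (d p) :=
  fun _ ht => ht p

lemma zero_mem_centerOfDistances {X : Type*} {d : X → X → ℝ} (hd : ∀ x, d x x = 0) :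
    0 ∈ centerOfDistances d :=
  fun p => ⟨p, hd p⟩

section wordDist

variable {n : ℕ}

lemma wordDist_self (x : Fin n → Bool) : wordDist x x = 0 := dif_pos rfl

lemma wordDist_mem_insert_zero_range (x y : Fin n → Bool) :
    wordDist x y ∈ insert 0 (range fun i : Fin n => (2 : ℝ) ^ (-(i : ℤ) - 1)) := by
  unfold wordDist
  split_ifs
  · exact mem_insert 0 _
  · exact mem_insert_of_mem 0 ⟨_, by rw [neg_add']⟩

lemma wordDist_update_not (p : Fin n → Bool) (i : Fin n) :
    wordDist p (update p i (!p i)) = (2 : ℝ) ^ (-(i : ℤ) - 1) := by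
  have hne : p ≠ update p i (!p i) := fun h => by simpa using congrFun h i
  have hdiff : (Finset.univ.filter fun j => p j ≠ update p i (!p i) j) = {i} := by
    ext j
    by_cases hj : j = i <;> simp [hj, update_apply]
  simp only [wordDist, dif_neg hne, hdiff, Finset.min'_singleton, neg_add']

lemma centerOfDistances_wordDist :
    centerOfDistances (wordDist (n := n))
      = insert 0 (range fun i : Fin n => (2 : ℝ) ^ (-(i : ℤ) - 1)) := by
  refine subset_antisymm (fun t ht => ?_) ?_
  · obtain ⟨x, rfl⟩ := centerOfDistances_subset_range _ (fun _ => false) ht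
    exact wordDist_mem_insert_zero_range _ x
  · rintro t (rfl | ⟨i, rfl⟩)
    · exact zero_mem_centerOfDistances wordDist_self
    · exact fun p => ⟨_, wordDist_update_not p i⟩

end wordDist

lemma ncard_insert_zero_range_two_zpow (n : ℕ) :
    (insert 0 (range fun i : Fin n => (2 : ℝ) ^ (-(i : ℤ) - 1))).ncard = 1 + n := by
  have hzero : (0 : ℝ) ∉ range fun i : Fin n => (2 : ℝ) ^ (-(i : ℤ) - 1) := by
    rintro ⟨i, hi⟩
    exact absurd hi (by positivity)
  have hinj : Injective fun i : Fin n => (2 : ℝ) ^ (-(i : ℤ) - 1) := fun a b hab => by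
    have := zpow_right_injective₀ (by norm_num : (0 : ℝ) < 2) (by norm_num) hab
    omega
  rw [ncard_insert_of_notMem hzero (finite_range _), ← image_univ,
    ncard_image_of_injective _ hinj, ncard_univ, Nat.card_eq_fintype_card, Fintype.card_fin,
    add_comm]

theorem center_of_binary_words_general (n : ℕ) :
    {t : ℝ | ∀ p : Fin n → Bool, ∃ x : Fin n → Bool, wordDist p x = t}
        = {0} ∪ (Set.range fun i : Fin n => (2 : ℝ) ^ (-(i : ℤ) - 1)) ∧
      ({t : ℝ | ∀ p : Fin n → Bool, ∃ x : Fin n → Bool, wordDist p x = t}).ncard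
        = 1 + n := by
  have hcenter : centerOfDistances (wordDist (n := n)) = _ := centerOfDistances_wordDist
  exact ⟨hcenter.trans (insert_eq _ _),
    (congrArg ncard hcenter).trans (ncard_insert_zero_range_two_zpow n)⟩

/-- The center of distances of the space of binary words of length `n` is
`{0} ∪ {2^{-1}, …, 2^{-n}}`, and hence has `1 + n = 1 + log₂ |X|` elements. -/
theorem center_of_binary_words (n : ℕ) (hn : 1 ≤ n) :
    {t : ℝ | ∀ p : Fin n → Bool, ∃ x : Fin n → Bool, wordDist p x = t}
        = {0} ∪ (Set.range fun i : Fin n => (2 : ℝ) ^ (-(i : ℤ) - 1)) ∧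
      ({t : ℝ | ∀ p : Fin n → Bool, ∃ x : Fin n → Bool, wordDist p x = t}).ncard
        = 1 + n :=
  center_of_binary_words_general n
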